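/- arXiv:2512.01732 — 2 statements merged into one kernel-verified Lean document; each statement's English description precedes it below -/
import Mathlib

section
/- Let each $f_i: \mathbb{R}^p \to \mathbb{R}$ be $\mu$-strongly convex and $L$-smooth with $f = \frac{1}{n}\sum_i f_i$. Then for any points $x_1, \dots, x_n, \bar{x}, x^* \in \mathbb{R}^p$, $\frac{1}{n}\sum_{i=1}^n \langle \bar{x} - x^*, \nabla f_i(x_i) \rangle \ge f(\bar{x}) - f(x^*) + \frac{\mu}{2n}\sum_{i=1}^n \|x_i - x^*\|^2 - \frac{L}{2n}\sum_{i=1}^n \|x_i - \bar{x}\|^2$. -/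
/-! Around each `x i`, the smoothness upper model of `f i` at `xbar` minus its strong-convexity
lower model at `xstar` leaves exactly `⟪xbar - xstar, g i (x i)⟫` as the linear part; averaging
over `i` gives the claim. -/

open Finset
open scoped RealInnerProductSpace

theorem le_inner_sub_of_quadratic_bounds {E : Type*} [NormedAddCommGroup E]
    [InnerProductSpace ℝ E] {f : E → ℝ} {g y a b : E} {μ L : ℝ}
    (hlow : f y + ⟪g, a - y⟫ + μ / 2 * ‖a - y‖ ^ 2 ≤ f a)
    (hup : f b ≤ f y + ⟪g, b - y⟫ + L / 2 * ‖b - y‖ ^ 2) :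
    f b - f a + μ / 2 * ‖y - a‖ ^ 2 - L / 2 * ‖y - b‖ ^ 2 ≤ ⟪b - a, g⟫ := by
  have hsplit : ⟪b - a, g⟫ = ⟪g, b - y⟫ - ⟪g, a - y⟫ := by
    rw [real_inner_comm, ← inner_sub_right, sub_sub_sub_cancel_right]
  rw [hsplit, norm_sub_rev y a, norm_sub_rev y b]
  linarith

theorem stmt11_general (p n : ℕ)
    (f : Fin n → EuclideanSpace ℝ (Fin p) → ℝ)
    (g : Fin n → EuclideanSpace ℝ (Fin p) → EuclideanSpace ℝ (Fin p))
    (μ L : ℝ)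
    (hsc : ∀ i x y, f i y ≥ f i x + ⟪g i x, y - x⟫ + μ / 2 * ‖y - x‖ ^ 2)
    (hsm : ∀ i x y, f i y ≤ f i x + ⟪g i x, y - x⟫ + L / 2 * ‖y - x‖ ^ 2)
    (F : EuclideanSpace ℝ (Fin p) → ℝ)
    (hF : F = fun x => (1 / (n : ℝ)) * ∑ i, f i x)
    (x : Fin n → EuclideanSpace ℝ (Fin p))
    (xbar xstar : EuclideanSpace ℝ (Fin p)) :
    (1 / (n : ℝ)) * ∑ i, ⟪xbar - xstar, g i (x i)⟫ ≥
      F xbar - F xstar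
      + μ / (2 * n) * ∑ i, ‖x i - xstar‖ ^ 2
      - L / (2 * n) * ∑ i, ‖x i - xbar‖ ^ 2 := by
  subst hF
  calc (1 / (n : ℝ)) * ∑ i, f i xbar - (1 / (n : ℝ)) * ∑ i, f i xstar
        + μ / (2 * n) * ∑ i, ‖x i - xstar‖ ^ 2 - L / (2 * n) * ∑ i, ‖x i - xbar‖ ^ 2
      = (1 / (n : ℝ)) * ∑ i, (f i xbar - f i xstar + μ / 2 * ‖x i - xstar‖ ^ 2
          - L / 2 * ‖x i - xbar‖ ^ 2) := by
        simp only [sum_sub_distrib, sum_add_distrib, ← mul_sum]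
        ring
    _ ≤ (1 / (n : ℝ)) * ∑ i, ⟪xbar - xstar, g i (x i)⟫ := by
        gcongr with i
        exact le_inner_sub_of_quadratic_bounds (hsc i (x i) xstar) (hsm i (x i) xbar)

theorem stmt11 (p n : ℕ) (hn : 0 < n)
    (f : Fin n → EuclideanSpace ℝ (Fin p) → ℝ)
    (g : Fin n → EuclideanSpace ℝ (Fin p) → EuclideanSpace ℝ (Fin p))
    (μ L : ℝ) (hμ : 0 < μ) (hL : 0 < L)
    (hgrad : ∀ i x, HasGradientAt (f i) (g i x) x)
    (hsc : ∀ i x y, f i y ≥ f i x + ⟪g i x, y - x⟫ + μ / 2 * ‖y - x‖ ^ 2)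
    (hsm : ∀ i x y, f i y ≤ f i x + ⟪g i x, y - x⟫ + L / 2 * ‖y - x‖ ^ 2)
    (F : EuclideanSpace ℝ (Fin p) → ℝ)
    (hF : F = fun x => (1 / (n : ℝ)) * ∑ i, f i x)
    (x : Fin n → EuclideanSpace ℝ (Fin p))
    (xbar xstar : EuclideanSpace ℝ (Fin p)) :
    (1 / (n : ℝ)) * ∑ i, ⟪xbar - xstar, g i (x i)⟫ ≥
      F xbar - F xstar
      + μ / (2 * n) * ∑ i, ‖x i - xstar‖ ^ 2
      - L / (2 * n) * ∑ i, ‖x i - xbar‖ ^ 2 :=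
  stmt11_general p n f g μ L hsc hsm F hF x xbar xstar
end

section
/- (Average-tracking property of ST-GT) Under the ST-GT updates with doubly stochastic $W_r$: $Y_{(r+1)\tau} = W_r Z_{r\tau} + G_{(r+1)\tau} - \frac{1}{\tau}\sum_{t=0}^{\tau-1} G_{r\tau+t}$ where $Z_{r\tau} = \frac{1}{\tau}\sum_{t=0}^{\tau-1} Y_{r\tau+t}$ and $Y_{r\tau+t+1} = Y_{r\tau+t} + G_{r\tau+t+1} - G_{r\tau+t}$ for $t \le \tau-2$. If $\frac{\mathbf{1}^{\top}}{n} Z_{r\tau} = \frac{\mathbf{1}^{\top}}{n}\frac{1}{\tau}\sum_{t=0}^{\tau-1} G_{r\tau+t}$, then $\frac{\mathbf{1}^{\top}}{n} Z_{(r+1)\tau} = \frac{\mathbf{1}^{\top}}{n}\frac{1}{\tau}\sum_{t=0}^{\tau-1} G_{(r+1)\tau+t}$, i.e., the row-average of the accumulated tracking variable equals the row-average of the running-average stochastic gradients at every round. -/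
/-! Left multiplication by a column-stochastic `W` preserves column sums, so with the induction
hypothesis the communication step gives `1ᵀ Y = 1ᵀ G` at the start of the next round. The local
steps add the same increments to `Y` and `G`, so this persists through the round, and averaging
over the round gives the claim. -/

open Finset Matrix

/-- The row-average `(1/n) 1ᵀ M` of an `n × p` matrix. -/
noncomputable def rowAvg {n p : ℕ} (M : Matrix (Fin n) (Fin p) ℝ) : Fin p → ℝ :=
  (n : ℝ)⁻¹ • ((fun _ => (1:ℝ)) ᵥ* M)

section RowAvg

variable {n p : ℕ}

lemma rowAvg_add (A B : Matrix (Fin n) (Fin p) ℝ) : rowAvg (A + B) = rowAvg A + rowAvg B := by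
  simp only [rowAvg, vecMul_add, smul_add]

lemma rowAvg_sub (A B : Matrix (Fin n) (Fin p) ℝ) : rowAvg (A - B) = rowAvg A - rowAvg B := by
  simp only [rowAvg, vecMul_sub, smul_sub]

lemma rowAvg_smul (c : ℝ) (A : Matrix (Fin n) (Fin p) ℝ) : rowAvg (c • A) = c • rowAvg A := by
  simp only [rowAvg, vecMul_smul, smul_comm c]

lemma rowAvg_sum {ι : Type*} (s : Finset ι) (f : ι → Matrix (Fin n) (Fin p) ℝ) :
    rowAvg (∑ i ∈ s, f i) = ∑ i ∈ s, rowAvg (f i) := by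
  induction s using Finset.cons_induction with
  | empty => simp [rowAvg]
  | cons i s hi ih => rw [sum_cons, sum_cons, rowAvg_add, ih]

lemma rowAvg_mul_of_vecMul_eq_one {W : Matrix (Fin n) (Fin n) ℝ}
    (hcol : (fun _ => (1:ℝ)) ᵥ* W = fun _ => (1:ℝ)) (M : Matrix (Fin n) (Fin p) ℝ) :
    rowAvg (W * M) = rowAvg M := by
  rw [rowAvg, ← vecMul_vecMul, hcol, rowAvg]

end RowAvg

lemma sub_eq_sub_of_tracking {M : Type*} [AddCommGroup M] {Y G : ℕ → M} {a m : ℕ}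
    (h : ∀ t, t + 1 ≤ m → Y (a + t + 1) = Y (a + t) + G (a + t + 1) - G (a + t)) :
    ∀ t ≤ m, Y (a + t) - G (a + t) = Y a - G a := by
  intro t ht
  induction t with
  | zero => rfl
  | succ k ih =>
    rw [← add_assoc, h k ht, ← ih (by omega)]
    abel

theorem stmt14_general (n p : ℕ) (τ : ℕ) (r : ℕ)
    (W : Matrix (Fin n) (Fin n) ℝ)
    (hcol : (fun _ => (1:ℝ)) ᵥ* W = fun _ => (1:ℝ))
    (Y G : ℕ → Matrix (Fin n) (Fin p) ℝ)
    (Z1 Z2 : Matrix (Fin n) (Fin p) ℝ)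
    (hYcomm : Y ((r + 1) * τ) =
      W * Z1 + G ((r + 1) * τ) - (τ : ℝ)⁻¹ • ∑ t ∈ range τ, G (r * τ + t))
    (hYloc : ∀ t, t + 1 ≤ τ - 1 →
      Y ((r + 1) * τ + t + 1) =
        Y ((r + 1) * τ + t) + G ((r + 1) * τ + t + 1) - G ((r + 1) * τ + t))
    (hZ2 : Z2 = (τ : ℝ)⁻¹ • ∑ t ∈ range τ, Y ((r + 1) * τ + t))
    (hinv : rowAvg Z1 = rowAvg ((τ : ℝ)⁻¹ • ∑ t ∈ range τ, G (r * τ + t))) :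
    rowAvg Z2 = rowAvg ((τ : ℝ)⁻¹ • ∑ t ∈ range τ, G ((r + 1) * τ + t)) := by
  set a := (r + 1) * τ
  have hstart : rowAvg (Y a - G a) = 0 := by
    rw [hYcomm, add_sub_right_comm, add_sub_cancel_right, rowAvg_sub,
      rowAvg_mul_of_vecMul_eq_one hcol, hinv, sub_self]
  have hlocal : ∀ t ∈ range τ, rowAvg (Y (a + t)) = rowAvg (G (a + t)) := by
    intro t ht
    rw [← sub_eq_zero, ← rowAvg_sub,
      sub_eq_sub_of_tracking hYloc t (Nat.le_sub_one_of_lt (mem_range.mp ht)), hstart]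
  rw [hZ2, rowAvg_smul, rowAvg_sum, sum_congr rfl hlocal, ← rowAvg_sum, ← rowAvg_smul]

theorem stmt14 (n p : ℕ) (τ : ℕ) (hτ : 1 ≤ τ) (r : ℕ)
    (W : Matrix (Fin n) (Fin n) ℝ)
    (hrow : W *ᵥ (fun _ => (1:ℝ)) = fun _ => (1:ℝ))
    (hcol : (fun _ => (1:ℝ)) ᵥ* W = fun _ => (1:ℝ))
    (Y G : ℕ → Matrix (Fin n) (Fin p) ℝ)
    (Z1 Z2 : Matrix (Fin n) (Fin p) ℝ)
    (hZ1 : Z1 = (τ : ℝ)⁻¹ • ∑ t ∈ range τ, Y (r * τ + t))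
    (hYcomm : Y ((r + 1) * τ) =
      W * Z1 + G ((r + 1) * τ) - (τ : ℝ)⁻¹ • ∑ t ∈ range τ, G (r * τ + t))
    (hYloc : ∀ t, t + 1 ≤ τ - 1 →
      Y ((r + 1) * τ + t + 1) =
        Y ((r + 1) * τ + t) + G ((r + 1) * τ + t + 1) - G ((r + 1) * τ + t))
    (hZ2 : Z2 = (τ : ℝ)⁻¹ • ∑ t ∈ range τ, Y ((r + 1) * τ + t))
    (hinv : rowAvg Z1 = rowAvg ((τ : ℝ)⁻¹ • ∑ t ∈ range τ, G (r * τ + t))) :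
    rowAvg Z2 = rowAvg ((τ : ℝ)⁻¹ • ∑ t ∈ range τ, G ((r + 1) * τ + t)) :=
  stmt14_general n p τ r W hcol Y G Z1 Z2 hYcomm hYloc hZ2 hinv
end
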